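/- Let P be a join-semilattice. The following are equivalent: (i) there exists a set E such that P embeds as a join-subsemilattice into the join-semilattice of finite subsets of E ordered by inclusion (with join given by union); (ii) for every x ∈ P, the set φ_Δ(x) = {I ∈ Δ(J(P)) : x ∉ I} is finite. -/

import Mathlib

open Set

/-- The poset `Ω(ω*)`: pairs `(i,j)` of naturals with `i < j`,
ordered by `(i,j) ≤ (i',j')` iff `i' ≤ i ∧ j ≤ j'`. We only need the carrier and the join. -/
abbrev OmegaStar : Type := {p : ℕ × ℕ // p.1 < p.2}

/-- The join in `Ω(ω*)`: `(i,j) ⊔ (i',j') = (min i i', max j j')`. -/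
def omegaJoin (a b : OmegaStar) : OmegaStar :=
  ⟨(min a.1.1 b.1.1, max a.1.2 b.1.2),
    lt_of_le_of_lt (min_le_left _ _) (lt_of_lt_of_le a.2 (le_max_left _ _))⟩

/-- `Ω̲(ω*)`: `Ω(ω*)` with a new least element (`none`) adjoined. -/
abbrev OmegaStarBot : Type := Option OmegaStar

/-- The join in `Ω̲(ω*)`. -/
def omegaBotJoin : OmegaStarBot → OmegaStarBot → OmegaStarBot
  | none, b => b
  | a, none => a
  | some a, some b => some (omegaJoin a b)

/-- `I_{<ω}(Q)`: the finitely generated initial segments of `Q`,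
i.e. downward closures of finite subsets of `Q` (including `∅`). -/
def FinGenInit (Q : Type*) [Preorder Q] : Set (Set Q) :=
  {S | ∃ F : Finset Q, S = {x | ∃ y ∈ F, x ≤ y}}

/-- An ideal of a poset: a nonempty, up-directed, downward closed subset. -/
def IsIdeal {P : Type*} [Preorder P] (I : Set P) : Prop :=
  I.Nonempty ∧ (∀ x ∈ I, ∀ y ∈ I, ∃ z ∈ I, x ≤ z ∧ y ≤ z) ∧
    ∀ x y : P, x ≤ y → y ∈ I → x ∈ I

/-- A completely meet-irreducible ideal: an ideal `I` for which there is an ideal `J ⊋ I`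
contained in every ideal strictly containing `I`. -/
def CMIdeal {P : Type*} [Preorder P] (I : Set P) : Prop :=
  IsIdeal I ∧ ∃ J : Set P, IsIdeal J ∧ I ⊂ J ∧ ∀ K : Set P, IsIdeal K → I ⊂ K → J ⊆ K

/-- An ideal of a sub-poset `P` of `α`: a subset of `P`, nonempty, up-directed,
downward closed within `P`. -/
def IsIdealIn {α : Type*} [Preorder α] (P I : Set α) : Prop :=
  I ⊆ P ∧ I.Nonempty ∧ (∀ x ∈ I, ∀ y ∈ I, ∃ z ∈ I, x ≤ z ∧ y ≤ z) ∧
    ∀ x ∈ P, ∀ y ∈ I, x ≤ y → x ∈ I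

/-- A completely meet-irreducible ideal of the sub-poset `P`. -/
def CMIdealIn {α : Type*} [Preorder α] (P I : Set α) : Prop :=
  IsIdealIn P I ∧ ∃ J : Set α, IsIdealIn P J ∧ I ⊂ J ∧
    ∀ K : Set α, IsIdealIn P K → I ⊂ K → J ⊆ K

/-- `{x} ∨ J`, the ideal `{z : z ≤ x ⊔ y for some y ∈ J}`. -/
def JoinUp {P : Type*} [SemilatticeSup P] (x : P) (J : Set P) : Set P :=
  {z | ∃ y ∈ J, z ≤ x ⊔ y}

/-- A nonempty chain `𝓘` of ideals is separating if for every `I ∈ 𝓘` with `I ≠ ⋃𝓘` and every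
`x ∈ ⋃𝓘 \ I` there is `J ∈ 𝓘` with `I ⊄ {x} ∨ J`. -/
def Separating {P : Type*} [SemilatticeSup P] (𝓘 : Set (Set P)) : Prop :=
  ∀ I ∈ 𝓘, I ≠ ⋃₀ 𝓘 → ∀ x ∈ (⋃₀ 𝓘) \ I, ∃ J ∈ 𝓘, ¬ I ⊆ JoinUp x J

/-- An independent subset of a join-semilattice: no member is below the join of finitely many
of the others. -/
def IndepSet {P : Type*} [SemilatticeSup P] (X : Set P) : Prop :=
  ∀ x ∈ X, ∀ F : Finset P, ∀ hF : F.Nonempty, ↑F ⊆ X \ {x} → ¬ x ≤ F.sup' hF id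

/-- `ℱ^{<ω}`: unions of finite subfamilies of `ℱ` (including `∅`). -/
def finUnions {α : Type*} (ℱ : Set (Set α)) : Set (Set α) :=
  {S | ∃ G : Finset (Set α), ↑G ⊆ ℱ ∧ S = ⋃₀ ↑G}

/-- `ℱ^∪`: unions of arbitrary subfamilies of `ℱ`. -/
def arbUnions {α : Type*} (ℱ : Set (Set α)) : Set (Set α) :=
  {S | ∃ G ⊆ ℱ, S = ⋃₀ G}

universe u

/-!
If `f` embeds `P` into finite sets, every completely meet-irreducible ideal `I` is cut out by a
single point `e` of `E`: take `c` in the cover of `I` but not in `I`; some `e ∈ f c` lies in no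
`f i` with `i ∈ I`, while `c ≤ y ⊔ i` for every `y ∉ I` and some `i ∈ I`, so `e ∈ f y`.
Hence `I = {y | e ∉ f y}`, and `I ↦ e` injects `φ_Δ(x)` into `f x`.
Conversely, Zorn's lemma yields enough completely meet-irreducible ideals to separate points,
so `φ_Δ` itself is an embedding into finite sets of such ideals; it turns joins into unions
because ideals are closed under joins.
-/

section Ideals

variable {P : Type*}

theorem isIdeal_iff_order_isIdeal [Preorder P] {I : Set P} : IsIdeal I ↔ Order.IsIdeal I :=
  ⟨fun ⟨hne, hdir, hlow⟩ => ⟨fun _ _ hba ha => hlow _ _ hba ha, hne, hdir⟩,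
    fun ⟨hlow, hne, hdir⟩ => ⟨hne, hdir, fun _ _ hxy hy => hlow hxy hy⟩⟩

variable [SemilatticeSup P] {I J : Set P} {x : P}

theorem IsIdeal.sup_mem_iff (hI : IsIdeal I) {a b : P} : a ⊔ b ∈ I ↔ a ∈ I ∧ b ∈ I :=
  Order.Ideal.sup_mem_iff (I := (isIdeal_iff_order_isIdeal.1 hI).toIdeal)

theorem IsIdeal.joinUp (hI : IsIdeal I) (x : P) : IsIdeal (JoinUp x I) := by
  obtain ⟨m, hm⟩ := hI.1
  refine ⟨⟨m, m, hm, le_sup_right⟩, ?_, fun a b hab ⟨y, hy, hb⟩ => ⟨y, hy, hab.trans hb⟩⟩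
  rintro a ⟨y₁, hy₁, ha⟩ b ⟨y₂, hy₂, hb⟩
  exact ⟨x ⊔ (y₁ ⊔ y₂), ⟨y₁ ⊔ y₂, hI.sup_mem_iff.2 ⟨hy₁, hy₂⟩, le_rfl⟩,
    ha.trans (sup_le_sup_left le_sup_left x), hb.trans (sup_le_sup_left le_sup_right x)⟩

theorem IsIdeal.ssubset_joinUp (hI : IsIdeal I) (hx : x ∉ I) : I ⊂ JoinUp x I := by
  obtain ⟨m, hm⟩ := hI.1
  exact ⟨fun z hz => ⟨z, hz, le_sup_right⟩, fun h => hx (h ⟨m, hm, le_sup_left⟩)⟩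

theorem joinUp_subset (hJ : IsIdeal J) (hx : x ∈ J) (hIJ : I ⊆ J) : JoinUp x I ⊆ J :=
  fun _ ⟨_, hy, hz⟩ => hJ.2.2 _ _ hz (hJ.sup_mem_iff.2 ⟨hx, hIJ hy⟩)

theorem CMIdeal.exists_notMem_forall_le_sup (hI : CMIdeal I) :
    ∃ c ∉ I, ∀ y ∉ I, ∃ i ∈ I, c ≤ y ⊔ i := by
  obtain ⟨hI, J, -, hIJ, hJmin⟩ := hI
  obtain ⟨c, hcJ, hcI⟩ := exists_of_ssubset hIJ
  exact ⟨c, hcI, fun y hy => hJmin _ (hI.joinUp y) (hI.ssubset_joinUp hy) hcJ⟩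

theorem exists_cmIdeal_mem_notMem {a b : P} (hab : ¬ a ≤ b) :
    ∃ I, CMIdeal I ∧ b ∈ I ∧ a ∉ I := by
  set S : Set (Set P) := {I | IsIdeal I ∧ b ∈ I ∧ a ∉ I}
  have hchain : ∀ c ⊆ S, IsChain (· ⊆ ·) c → c.Nonempty → ∃ ub ∈ S, ∀ s ∈ c, s ⊆ ub := by
    intro c hcS hc hne
    obtain ⟨I, hI⟩ := hne
    refine ⟨⋃₀ c, ⟨?_, ⟨I, hI, (hcS hI).2.1⟩, fun ⟨K, hK, haK⟩ => (hcS hK).2.2 haK⟩,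
      fun _ => subset_sUnion_of_mem⟩
    exact isIdeal_iff_order_isIdeal.2 <| Order.isIdeal_sUnion_of_isChain
      (fun K hK => isIdeal_iff_order_isIdeal.1 (hcS hK).1) hc ⟨I, hI⟩
  have hIic : Iic b ∈ S :=
    ⟨⟨⟨b, le_rfl⟩, fun _ hx _ hy => ⟨b, le_rfl, hx, hy⟩, fun _ _ hxy hy => hxy.trans hy⟩,
      le_rfl, hab⟩
  obtain ⟨M, -, hM⟩ := zorn_subset_nonempty S hchain _ hIic
  obtain ⟨hMideal, hbM, haM⟩ := hM.prop
  refine ⟨M, ⟨hMideal, JoinUp a M, hMideal.joinUp a, hMideal.ssubset_joinUp haM,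
    fun K hK hMK => joinUp_subset hK ?_ hMK.subset⟩, hbM, haM⟩
  by_contra haK
  exact hMK.ne (hM.eq_of_subset ⟨hK, hMK.subset hbM, haK⟩ hMK.subset)

end Ideals

section FinsetEmbedding

variable {P E : Type*} [SemilatticeSup P] [DecidableEq E] {f : P → Finset E}

theorem monotone_of_map_sup (hf : ∀ a b, f (a ⊔ b) = f a ∪ f b) : Monotone f := by
  intro a b h
  rw [← sup_eq_right.2 h, hf]
  exact Finset.subset_union_left

theorem le_of_map_subset (hinj : Function.Injective f) (hf : ∀ a b, f (a ⊔ b) = f a ∪ f b)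
    {a b : P} (h : f a ⊆ f b) : a ≤ b :=
  sup_eq_right.1 (hinj (by rw [hf, Finset.union_eq_right.2 h]))

theorem IsIdeal.exists_mem_map_forall_notMem (hinj : Function.Injective f)
    (hf : ∀ a b, f (a ⊔ b) = f a ∪ f b) {I : Set P} (hI : IsIdeal I) {c : P} (hc : c ∉ I) :
    ∃ e ∈ f c, ∀ y ∈ I, e ∉ f y := by
  by_contra! hcov
  have hdir : DirectedOn (fun y z => (f y : Set E) ⊆ f z) I :=
    DirectedOn.mono hI.2.1 fun _ _ h => Finset.coe_subset.2 (monotone_of_map_sup hf h)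
  obtain ⟨w, hw, hcw⟩ := hdir.exists_mem_subset_of_finset_subset_biUnion hI.1
    fun e he => let ⟨y, hy, hey⟩ := hcov e he; mem_biUnion hy hey
  exact hc (hI.2.2 _ _ (le_of_map_subset hinj hf hcw) hw)

theorem CMIdeal.exists_eq_setOf_notMem_map (hinj : Function.Injective f)
    (hf : ∀ a b, f (a ⊔ b) = f a ∪ f b) {I : Set P} (hI : CMIdeal I) :
    ∃ e, I = {y | e ∉ f y} := by
  obtain ⟨c, hcI, hcover⟩ := hI.exists_notMem_forall_le_sup
  obtain ⟨e, hec, he⟩ := hI.1.exists_mem_map_forall_notMem hinj hf hcI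
  refine ⟨e, Set.ext fun y => ⟨he y, fun hey => by_contra fun hy => ?_⟩⟩
  obtain ⟨i, hi, hci⟩ := hcover y hy
  have hmem : e ∈ f y ∪ f i := hf y i ▸ monotone_of_map_sup hf hci hec
  exact (Finset.mem_union.1 hmem).elim hey (he i hi)

theorem finite_setOf_cmIdeal_notMem (hinj : Function.Injective f)
    (hf : ∀ a b, f (a ⊔ b) = f a ∪ f b) (x : P) : {I : Set P | CMIdeal I ∧ x ∉ I}.Finite := by
  refine ((f x).finite_toSet.image fun e => {y | e ∉ f y}).subset ?_
  rintro I ⟨hI, hxI⟩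
  obtain ⟨e, rfl⟩ := hI.exists_eq_setOf_notMem_map hinj hf
  exact ⟨e, by simpa using hxI, rfl⟩

end FinsetEmbedding

section CMIdealRepresentation

variable {P : Type*} [SemilatticeSup P]

theorem setOf_cmIdeal_notMem_subset_iff {a b : P} :
    {I : {I : Set P // CMIdeal I} | a ∉ I.1} ⊆ {I | b ∉ I.1} ↔ a ≤ b := by
  refine ⟨fun h => by_contra fun hab => ?_, fun hab I ha hb => ha (I.2.1.2.2 _ _ hab hb)⟩
  obtain ⟨I, hI, hbI, haI⟩ := exists_cmIdeal_mem_notMem hab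
  exact h (a := ⟨I, hI⟩) haI hbI

theorem setOf_cmIdeal_notMem_sup (a b : P) :
    {I : {I : Set P // CMIdeal I} | a ⊔ b ∉ I.1} = {I | a ∉ I.1} ∪ {I | b ∉ I.1} := by
  ext I
  exact I.2.1.sup_mem_iff.not.trans not_and_or

theorem exists_finset_embedding_of_finite_setOf_cmIdeal_notMem {P : Type u} [SemilatticeSup P]
    (hfin : ∀ x : P, {I : Set P | CMIdeal I ∧ x ∉ I}.Finite) :
    ∃ (E : Type u) (_ : DecidableEq E) (f : P → Finset E),
      Function.Injective f ∧ ∀ a b, f (a ⊔ b) = f a ∪ f b := by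
  have hfin' (x : P) : {I : {I : Set P // CMIdeal I} | x ∉ I.1}.Finite :=
    ((hfin x).preimage Subtype.val_injective.injOn).subset fun I hI => ⟨I.2, hI⟩
  refine ⟨{I : Set P // CMIdeal I}, inferInstance, fun x => (hfin' x).toFinset,
    fun a b hab => ?_, fun a b => ?_⟩
  · rw [Set.Finite.toFinset_inj] at hab
    exact le_antisymm (setOf_cmIdeal_notMem_subset_iff.1 hab.le)
      (setOf_cmIdeal_notMem_subset_iff.1 hab.ge)
  · rw [← Set.Finite.toFinset_union (hfin' a) (hfin' b) ((hfin' a).union (hfin' b)),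
      Set.Finite.toFinset_inj]
    exact setOf_cmIdeal_notMem_sup a b

end CMIdealRepresentation

/-- A join-semilattice `P` embeds as a join-subsemilattice into the finite
subsets of some set `E` iff for every `x ∈ P` the set `φ_Δ(x) = {I ∈ Δ(J(P)) : x ∉ I}` is
finite. -/
theorem embeds_finsets_iff_phiDelta_finite {P : Type u} [SemilatticeSup P] :
    (∃ (E : Type u) (_ : DecidableEq E) (f : P → Finset E),
        Function.Injective f ∧ ∀ a b, f (a ⊔ b) = f a ∪ f b) ↔
      ∀ x : P, {I : Set P | CMIdeal I ∧ x ∉ I}.Finite :=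
  ⟨fun ⟨_, _, _, hinj, hf⟩ => finite_setOf_cmIdeal_notMem hinj hf,
    exists_finset_embedding_of_finite_setOf_cmIdeal_notMem⟩
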